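/- arXiv:1602.03164 — 2 statements merged into one kernel-verified Lean document; each statement's English description precedes it below -/
import Mathlib

section
/- In the group G = ⟨X, Y, Z | X^n = Z^α, Y^2 = 1, YX = X^{n-1}YZ^γ, YZ = ZY, XZ = ZX, Z^m = 1⟩, conjugation by Y inverts the element X^2 Z^{-α-γ}: that is, Y (X^2 Z^{-α-γ}) Y^{-1} = (X^2 Z^{-α-γ})^{-1}. Consequently the cyclic subgroup generated by X^2 Z^{-α-γ} is normal in G. -/
/-- Relations for the central extension of the dihedral group `D_{2n}` by `ℤ/mℤ`
with parameters `(α, β, γ)`: generators `X = 0`, `Y = 1`, `Z = 2`. -/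
def grels (n m : ℕ) (α β γ : ℤ) : Set (FreeGroup (Fin 3)) :=
  { FreeGroup.of (0 : Fin 3) ^ n * (FreeGroup.of (2 : Fin 3) ^ α)⁻¹,
    FreeGroup.of (1 : Fin 3) ^ 2 * (FreeGroup.of (2 : Fin 3) ^ β)⁻¹,
    FreeGroup.of (1 : Fin 3) * FreeGroup.of (0 : Fin 3) *
      (FreeGroup.of (0 : Fin 3) ^ (n - 1) * FreeGroup.of (1 : Fin 3) *
        FreeGroup.of (2 : Fin 3) ^ γ)⁻¹,
    FreeGroup.of (1 : Fin 3) * FreeGroup.of (2 : Fin 3) *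
      (FreeGroup.of (2 : Fin 3) * FreeGroup.of (1 : Fin 3))⁻¹,
    FreeGroup.of (0 : Fin 3) * FreeGroup.of (2 : Fin 3) *
      (FreeGroup.of (2 : Fin 3) * FreeGroup.of (0 : Fin 3))⁻¹,
    FreeGroup.of (2 : Fin 3) ^ m }

/-- The central extension `G(α, β, γ)` of `D_{2n}` by `ℤ/mℤ`. -/
abbrev GG (n m : ℕ) (α β γ : ℤ) : Type := PresentedGroup (grels n m α β γ)

def gX (n m : ℕ) (α β γ : ℤ) : GG n m α β γ := PresentedGroup.of 0
def gY (n m : ℕ) (α β γ : ℤ) : GG n m α β γ := PresentedGroup.of 1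
def gZ (n m : ℕ) (α β γ : ℤ) : GG n m α β γ := PresentedGroup.of 2

/-!
Conjugation by `Y` fixes `Z` and, since `X^{n-1} = Z^α X⁻¹`, sends `X` to `Z^{α+γ} X⁻¹`. As `X`
and `Z` commute, it therefore sends `X² Z^{-(α+γ)}` to `Z^{α+γ} X⁻²`, the inverse. The generators
`X` and `Z` commute with `X² Z^{-(α+γ)}` and `Y` inverts it, so all three normalize the cyclic
subgroup it generates.
-/

namespace Subgroup

variable {G : Type*} [Group G]

theorem mem_normalizer_zpowers_of_conj {g w : G}
    (h : g * w * g⁻¹ = w ∨ g * w * g⁻¹ = w⁻¹) : g ∈ normalizer (zpowers w : Set G) := by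
  rw [mem_normalizer_iff_map_conj_eq, MonoidHom.map_zpowers, MonoidHom.coe_coe,
    MulAut.conj_apply]
  rcases h with h | h <;> rw [h]
  exact zpowers_inv

theorem zpowers_normal_of_closure_eq_top {S : Set G} (hS : closure S = ⊤) {w : G}
    (h : ∀ s ∈ S, s * w * s⁻¹ = w ∨ s * w * s⁻¹ = w⁻¹) : (zpowers w).Normal := by
  rw [← normalizer_eq_top_iff, eq_top_iff, ← hS, closure_le]
  exact fun s hs ↦ mem_normalizer_zpowers_of_conj (h s hs)

end Subgroup

section Relations

variable {G : Type*} [Group G] {x y z : G}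

theorem conj_eq_zpow_mul_inv {n : ℕ} {α γ : ℤ} (hn : n ≠ 0) (hx : x ^ n = z ^ α)
    (hyx : y * x = x ^ (n - 1) * y * z ^ γ) (hxz : Commute x z) (hyz : Commute y z) :
    y * x * y⁻¹ = z ^ (α + γ) * x⁻¹ := by
  have hx' : x ^ (n - 1) = z ^ α * x⁻¹ := by
    rw [pow_sub x (Nat.one_le_iff_ne_zero.mpr hn), hx, pow_one]
  calc y * x * y⁻¹ = x ^ (n - 1) * (y * z ^ γ * y⁻¹) := by rw [hyx]; group
    _ = z ^ α * x⁻¹ * z ^ γ := by rw [(hyz.zpow_right γ).mul_inv_cancel, hx']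
    _ = z ^ (α + γ) * x⁻¹ := by rw [mul_assoc, (hxz.inv_left.zpow_right γ).eq, zpow_add, mul_assoc]

theorem conj_sq_mul_zpow_neg_eq_inv {c : ℤ} (hxz : Commute x z) (hyz : Commute y z)
    (h : y * x * y⁻¹ = z ^ c * x⁻¹) :
    y * (x ^ 2 * z ^ (-c)) * y⁻¹ = (x ^ 2 * z ^ (-c))⁻¹ := by
  calc y * (x ^ 2 * z ^ (-c)) * y⁻¹ = (z ^ c * x⁻¹) ^ 2 * z ^ (-c) := by
        rw [← MulAut.conj_apply, map_mul, map_pow, map_zpow, MulAut.conj_apply, h,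
          MulAut.conj_apply, hyz.mul_inv_cancel]
    _ = z ^ c * x⁻¹ ^ 2 := by
        rw [(hxz.inv_left.zpow_right c).symm.mul_pow, mul_assoc,
          ((hxz.inv_left.pow_left 2).zpow_right (-c)).eq, ← mul_assoc, zpow_neg, sq (z ^ c),
          mul_inv_cancel_right]
    _ = (x ^ 2 * z ^ (-c))⁻¹ := by rw [mul_inv_rev, zpow_neg, inv_inv, inv_pow]

end Relations

section Presentation

variable {n m : ℕ} {α β γ : ℤ}

theorem gX_pow : gX n m α β γ ^ n = gZ n m α β γ ^ α := by
  have h := PresentedGroup.mk_eq_mk_of_mul_inv_mem (rels := grels n m α β γ) (Or.inl rfl)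
  rwa [map_pow, map_zpow] at h

theorem gY_mul_gX :
    gY n m α β γ * gX n m α β γ = gX n m α β γ ^ (n - 1) * gY n m α β γ * gZ n m α β γ ^ γ := by
  have h := PresentedGroup.mk_eq_mk_of_mul_inv_mem (rels := grels n m α β γ)
    (Or.inr <| Or.inr <| Or.inl rfl)
  rwa [map_mul, map_mul, map_mul, map_pow, map_zpow] at h

theorem commute_gY_gZ : Commute (gY n m α β γ) (gZ n m α β γ) :=
  PresentedGroup.mk_eq_mk_of_mul_inv_mem (Or.inr <| Or.inr <| Or.inr <| Or.inl rfl)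

theorem commute_gX_gZ : Commute (gX n m α β γ) (gZ n m α β γ) :=
  PresentedGroup.mk_eq_mk_of_mul_inv_mem (Or.inr <| Or.inr <| Or.inr <| Or.inr <| Or.inl rfl)

end Presentation

theorem stmt3_general (n m : ℕ) (hn : 3 ≤ n) (α γ : ℤ) :
    gY n m α 0 γ * ((gX n m α 0 γ) ^ 2 * (gZ n m α 0 γ) ^ (-α - γ)) * (gY n m α 0 γ)⁻¹ =
      ((gX n m α 0 γ) ^ 2 * (gZ n m α 0 γ) ^ (-α - γ))⁻¹ ∧
    (Subgroup.zpowers ((gX n m α 0 γ) ^ 2 * (gZ n m α 0 γ) ^ (-α - γ))).Normal := by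
  set X := gX n m α 0 γ
  set Y := gY n m α 0 γ
  set Z := gZ n m α 0 γ
  have hXZ : Commute X Z := commute_gX_gZ
  have hYZ : Commute Y Z := commute_gY_gZ
  have hconj : Y * X * Y⁻¹ = Z ^ (α + γ) * X⁻¹ :=
    conj_eq_zpow_mul_inv (by omega) gX_pow gY_mul_gX hXZ hYZ
  have hinv := conj_sq_mul_zpow_neg_eq_inv hXZ hYZ hconj
  rw [neg_add'] at hinv
  refine ⟨hinv, Subgroup.zpowers_normal_of_closure_eq_top (PresentedGroup.closure_range_of _) ?_⟩
  rintro _ ⟨i, rfl⟩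
  fin_cases i
  · exact .inl ((Commute.self_pow X 2).mul_right (hXZ.zpow_right _)).mul_inv_cancel
  · exact .inr hinv
  · exact .inl ((hXZ.symm.pow_right 2).mul_right (Commute.self_zpow Z _)).mul_inv_cancel

/-- In `G(α, 0, γ)`, conjugation by `Y` inverts `X² Z^{-α-γ}`; consequently the
cyclic subgroup it generates is normal. -/
theorem stmt3 (n m : ℕ) (hn : 3 ≤ n) (hm : 1 ≤ m) (α γ : ℤ) :
    gY n m α 0 γ * ((gX n m α 0 γ) ^ 2 * (gZ n m α 0 γ) ^ (-α - γ)) * (gY n m α 0 γ)⁻¹ =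
      ((gX n m α 0 γ) ^ 2 * (gZ n m α 0 γ) ^ (-α - γ))⁻¹ ∧
    (Subgroup.zpowers ((gX n m α 0 γ) ^ 2 * (gZ n m α 0 γ) ^ (-α - γ))).Normal :=
  stmt3_general n m hn α γ
end

section
/- Let n and m be even, with n ≥ 4, m ≥ 2. For G = ⟨X, Y, Z | X^n = Z^α, Y² = 1, YX = X^{n-1}YZ^γ, YZ = ZY, XZ = ZX, Z^m = 1⟩ with (n/2)(α+γ) ≡ α + m/2 (mod m), the subgroup ⟨X, Z⟩ is abelian of index 2 in G; consequently every irreducible complex representation of G has dimension 1 or 2. -/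
open FiniteDimensional

/-!
`X` and `Z` commute, so `H = ⟨X, Z⟩` is abelian. Conjugation by `Y` sends `X` to `X^(n-1) Z^γ`
and fixes `Z`, and `Y² = Z^β ∈ H`, so `Y` normalizes `H` and `G = H ∪ H Y`; on the other hand
`Y ∉ H`, because every relator contains an even number of `Y`'s. Hence `[G : H] = 2`.

If `V` is irreducible, a common eigenvector `w` of the commuting operators `ρ h`, `h ∈ H`, together
with `ρ g w` for one `g ∉ H`, spans a `G`-invariant subspace (as `g⁻¹ x ∈ H` for every `x ∉ H`),
which must be all of `V`.
-/

open Module Submodule in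
theorem Module.End.exists_common_eigenvector {K V : Type*} [Field K] [IsAlgClosed K]
    [AddCommGroup V] [Module K V] [FiniteDimensional K V] [Nontrivial V]
    (S : Set (End K V)) (hS : ∀ f ∈ S, ∀ g ∈ S, Commute f g) :
    ∃ v : V, v ≠ 0 ∧ ∀ f ∈ S, ∃ c : K, f v = c • v := by
  -- A minimal nonzero `S`-invariant subspace `W` lies in an eigenspace of each `f ∈ S`: that
  -- eigenspace meets `W` in a nonzero `S`-invariant subspace, as `S` commutes with `f`.
  let P : Set (Submodule K V) := {W | W ≠ ⊥ ∧ ∀ f ∈ S, ∀ w ∈ W, f w ∈ W}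
  obtain ⟨W, ⟨hW0, hWS⟩, hmin⟩ :=
    wellFounded_lt.has_min P ⟨⊤, top_ne_bot, fun _ _ _ _ => mem_top⟩
  have hscalar : ∀ f ∈ S, ∃ c : K, ∀ w ∈ W, f w = c • w := by
    intro f hf
    have : Nontrivial W := nontrivial_iff_ne_bot.mpr hW0
    obtain ⟨c, hc⟩ := End.exists_eigenvalue (f.restrict (hWS f hf))
    have hW' : W ⊓ f.eigenspace c ∈ P := by
      refine ⟨fun h => hc (End.eigenspace_restrict_eq_bot _ ?_),
        fun g hg w hw => ⟨hWS g hg w hw.1, ?_⟩⟩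
      · rw [disjoint_iff, inf_comm, h]
      · have hfw : f w = c • w := End.mem_eigenspace_iff.mp hw.2
        show g w ∈ f.eigenspace c
        rw [End.mem_eigenspace_iff, ← End.mul_apply, (hS f hf g hg).eq, End.mul_apply, hfw,
          map_smul]
    have hW'_eq : W ⊓ f.eigenspace c = W := eq_of_le_of_not_lt inf_le_left (hmin _ hW')
    exact ⟨c, fun w hw => End.mem_eigenspace_iff.mp (hW'_eq.ge hw).2⟩
  obtain ⟨v, hvW, hv0⟩ := exists_mem_ne_zero_of_ne_bot hW0
  exact ⟨v, hv0, fun f hf => (hscalar f hf).imp fun c hc => hc v hvW⟩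

theorem Subgroup.mem_normalizer_closure_of_conj_mem {G : Type*} [Group G] {s : Set G} {y : G}
    (hs : ∀ g ∈ s, y * g * y⁻¹ ∈ closure s) (hy : y ^ 2 ∈ closure s) :
    y ∈ normalizer (closure s : Set G) := by
  have hconj : ∀ h ∈ closure s, y * h * y⁻¹ ∈ closure s := by
    have : (closure s).map (MulAut.conj y).toMonoidHom ≤ closure s := by
      rw [MonoidHom.map_closure, closure_le]
      rintro _ ⟨g, hg, rfl⟩
      exact hs g hg
    exact fun h hh => this ⟨h, hh, rfl⟩
  refine mem_normalizer_iff.mpr fun h => ⟨hconj h, fun hh => ?_⟩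
  rw [show h = (y ^ 2)⁻¹ * (y * (y * h * y⁻¹) * y⁻¹) * y ^ 2 by group]
  exact mul_mem (mul_mem (inv_mem hy) (hconj _ hh)) hy

theorem Subgroup.index_eq_two_of_sup_zpowers_eq_top {G : Type*} [Group G] {H : Subgroup G}
    {y : G} (hyN : y ∈ normalizer (H : Set G)) (hy2 : y ^ 2 ∈ H) (hyH : y ∉ H)
    (htop : H ⊔ zpowers y = ⊤) :
    H.index = 2 := by
  refine index_eq_two_iff_exists_notMem_and.mpr ⟨y, hyH, fun b => ?_⟩
  have hb : b ∈ (↑(H ⊔ zpowers y) : Set G) := by rw [htop]; trivial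
  rw [coe_mul_of_right_le_normalizer_left H _ (zpowers_le.mpr hyN)] at hb
  obtain ⟨h, hh, _, ⟨i, rfl⟩, rfl⟩ := hb
  obtain ⟨k, rfl | rfl⟩ := Int.even_or_odd' i
  · right
    show h * y ^ (2 * k) ∈ H
    rw [zpow_mul, zpow_ofNat]
    exact mul_mem hh (zpow_mem hy2 k)
  · left
    show h * y ^ (2 * k + 1) * y ∈ H
    rw [mul_assoc, ← zpow_add_one, show 2 * k + 1 + 1 = 2 * (k + 1) by ring, zpow_mul,
      zpow_ofNat]
    exact mul_mem hh (zpow_mem hy2 _)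

open Module Submodule in
theorem Representation.finrank_le_two_of_index_two {k G V : Type*} [Field k] [IsAlgClosed k]
    [Group G] [AddCommGroup V] [Module k V] [FiniteDimensional k V]
    (ρ : Representation k G V) (H : Subgroup G) [IsMulCommutative H] (hH : H.index = 2)
    (hirr : ∀ W : Submodule k V, (∀ g : G, ∀ v ∈ W, ρ g v ∈ W) → W = ⊥ ∨ W = ⊤) :
    finrank k V ≤ 2 := by
  rcases subsingleton_or_nontrivial V with _ | _
  · simp [finrank_zero_of_subsingleton]
  obtain ⟨w, hw0, hw⟩ := End.exists_common_eigenvector (ρ '' H) <| by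
    rintro _ ⟨a, ha, rfl⟩ _ ⟨b, hb, rfl⟩
    exact Commute.map (setLike_mul_comm ha hb) ρ
  obtain ⟨g, hg⟩ : ∃ g, g ∉ H := by
    by_contra! h
    rw [(Subgroup.eq_top_iff' H).mpr h, Subgroup.index_top] at hH
    exact absurd hH (by norm_num)
  set W := span k {w, ρ g w}
  have hmem : ∀ x, ρ x w ∈ W := by
    intro x
    by_cases hx : x ∈ H
    · obtain ⟨c, hc⟩ := hw _ ⟨x, hx, rfl⟩
      rw [hc]
      exact smul_mem _ _ (subset_span (Set.mem_insert _ _))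
    · have hgx : g⁻¹ * x ∈ H :=
        (Subgroup.mul_mem_iff_of_index_two hH).mpr (iff_of_false (by simpa using hg) hx)
      obtain ⟨c, hc⟩ := hw _ ⟨_, hgx, rfl⟩
      have : ρ x w = c • ρ g w := by
        rw [← map_smul, ← hc, ← Module.End.mul_apply, ← map_mul, mul_inv_cancel_left]
      rw [this]
      exact smul_mem _ _ (subset_span (Set.mem_insert_of_mem _ rfl))
  have hW_inv : ∀ x, ∀ v ∈ W, ρ x v ∈ W := by
    intro x v hv
    refine (span_le.mpr ?_ : W ≤ W.comap (ρ x)) hv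
    rintro _ (rfl | rfl)
    · exact hmem x
    · show ρ x (ρ g w) ∈ W
      rw [← Module.End.mul_apply, ← map_mul]
      exact hmem _
  rcases hirr W hW_inv with hbot | htop
  · exact absurd ((mem_bot k).mp (hbot ▸ subset_span (Set.mem_insert _ _))) hw0
  · classical
    rw [← finrank_top, ← htop]
    exact (finrank_span_le_card _).trans (by simpa using Finset.card_le_two)

namespace GG

variable {n m : ℕ} {α β γ : ℤ}

theorem commute_gX_gZ : Commute (gX n m α β γ) (gZ n m α β γ) :=
  PresentedGroup.mk_eq_mk_of_mul_inv_mem (by simp [grels])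

theorem commute_gY_gZ : Commute (gY n m α β γ) (gZ n m α β γ) :=
  PresentedGroup.mk_eq_mk_of_mul_inv_mem (by simp [grels])

theorem gY_sq : gY n m α β γ ^ 2 = gZ n m α β γ ^ β :=
  PresentedGroup.mk_eq_mk_of_mul_inv_mem (by simp [grels])

theorem gY_mul_gX :
    gY n m α β γ * gX n m α β γ = gX n m α β γ ^ (n - 1) * gY n m α β γ * gZ n m α β γ ^ γ :=
  PresentedGroup.mk_eq_mk_of_mul_inv_mem (by simp [grels])

theorem gY_conj_gX : gY n m α β γ * gX n m α β γ * (gY n m α β γ)⁻¹ =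
    gX n m α β γ ^ (n - 1) * gZ n m α β γ ^ γ := by
  rw [gY_mul_gX, mul_assoc _ (gY n m α β γ), (commute_gY_gZ.zpow_right γ).eq]
  group

theorem gY_conj_gZ : gY n m α β γ * gZ n m α β γ * (gY n m α β γ)⁻¹ = gZ n m α β γ := by
  rw [commute_gY_gZ.eq, mul_inv_cancel_right]

def parity : GG n m α β γ →* Multiplicative (ZMod 2) :=
  PresentedGroup.toGroup (f := ![1, Multiplicative.ofAdd 1, 1]) <| by
    rintro r (rfl | rfl | rfl | rfl | rfl | rfl) <;> simp [sq, ← ofAdd_add, CharTwo.add_self_eq_zero]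

theorem gY_notMem_closure : gY n m α β γ ∉ Subgroup.closure {gX n m α β γ, gZ n m α β γ} := by
  intro hY
  have hker : Subgroup.closure {gX n m α β γ, gZ n m α β γ} ≤ parity.ker := by
    rw [Subgroup.closure_le]
    rintro _ (rfl | rfl) <;> simp [parity, gX, gZ]
  simpa [parity, gY] using hker hY

theorem closure_sup_zpowers_gY_eq_top :
    Subgroup.closure {gX n m α β γ, gZ n m α β γ} ⊔ Subgroup.zpowers (gY n m α β γ) = ⊤ := by
  rw [eq_top_iff, ← PresentedGroup.closure_range_of, Subgroup.closure_le]
  rintro _ ⟨i, rfl⟩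
  fin_cases i
  · exact Subgroup.mem_sup_left (Subgroup.subset_closure (Set.mem_insert _ _))
  · exact Subgroup.mem_sup_right (Subgroup.mem_zpowers _)
  · exact Subgroup.mem_sup_left (Subgroup.subset_closure (Set.mem_insert_of_mem _ rfl))

theorem isMulCommutative_closure_gX_gZ :
    IsMulCommutative (Subgroup.closure {gX n m α β γ, gZ n m α β γ}) :=
  Subgroup.isMulCommutative_closure <| by
    rintro _ (rfl | rfl) _ (rfl | rfl)
    exacts [rfl, commute_gX_gZ.eq, commute_gX_gZ.symm.eq, rfl]

theorem index_closure_gX_gZ : (Subgroup.closure {gX n m α β γ, gZ n m α β γ}).index = 2 := by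
  have hZ : gZ n m α β γ ∈ Subgroup.closure {gX n m α β γ, gZ n m α β γ} :=
    Subgroup.subset_closure (Set.mem_insert_of_mem _ rfl)
  have hX : gX n m α β γ ∈ Subgroup.closure {gX n m α β γ, gZ n m α β γ} :=
    Subgroup.subset_closure (Set.mem_insert _ _)
  have hY2 : gY n m α β γ ^ 2 ∈ Subgroup.closure {gX n m α β γ, gZ n m α β γ} :=
    gY_sq ▸ zpow_mem hZ β
  refine Subgroup.index_eq_two_of_sup_zpowers_eq_top
    (Subgroup.mem_normalizer_closure_of_conj_mem ?_ hY2) hY2 gY_notMem_closure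
    closure_sup_zpowers_gY_eq_top
  rintro _ (rfl | rfl)
  · rw [gY_conj_gX]
    exact mul_mem (pow_mem hX _) (zpow_mem hZ _)
  · rw [gY_conj_gZ]
    exact hZ

end GG

theorem stmt19_general (n m : ℕ) (α γ : ℤ) :
    (∀ a ∈ Subgroup.closure {gX n m α 0 γ, gZ n m α 0 γ},
      ∀ b ∈ Subgroup.closure {gX n m α 0 γ, gZ n m α 0 γ}, a * b = b * a) ∧
    (Subgroup.closure {gX n m α 0 γ, gZ n m α 0 γ}).index = 2 ∧
    ∀ (V : Type) (_ : AddCommGroup V) (_ : Module ℂ V) (_ : FiniteDimensional ℂ V)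
      (_ : Nontrivial V) (ρ : Representation ℂ (GG n m α 0 γ) V),
      (∀ W : Submodule ℂ V, (∀ g : GG n m α 0 γ, ∀ v ∈ W, ρ g v ∈ W) →
        W = ⊥ ∨ W = ⊤) →
      Module.finrank ℂ V = 1 ∨ Module.finrank ℂ V = 2 := by
  have := GG.isMulCommutative_closure_gX_gZ (n := n) (m := m) (α := α) (β := 0) (γ := γ)
  refine ⟨fun a ha b hb => setLike_mul_comm ha hb, GG.index_closure_gX_gZ,
    fun V _ _ _ _ ρ hirr => ?_⟩
  have hle := ρ.finrank_le_two_of_index_two _ GG.index_closure_gX_gZ hirr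
  have hpos := Module.finrank_pos (R := ℂ) (M := V)
  omega

/-- For `n = 2n₂ ≥ 4`, `m = 2m₂ ≥ 2` even with `(n/2)(α+γ) ≡ α + m/2 (mod m)`, the
subgroup `⟨X, Z⟩` of `G(α, 0, γ)` is abelian of index `2`; consequently every
(nonzero, finite-dimensional) irreducible complex representation of `G(α, 0, γ)`
has dimension `1` or `2`. -/
theorem stmt19 (n₂ m₂ : ℕ) (n m : ℕ) (hn : n = 2 * n₂) (hm : m = 2 * m₂)
    (hn4 : 4 ≤ n) (hm2 : 2 ≤ m) (α γ : ℤ)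
    (hreal : (n₂ : ℤ) * (α + γ) ≡ α + (m₂ : ℤ) [ZMOD (m : ℤ)]) :
    (∀ a ∈ Subgroup.closure {gX n m α 0 γ, gZ n m α 0 γ},
      ∀ b ∈ Subgroup.closure {gX n m α 0 γ, gZ n m α 0 γ}, a * b = b * a) ∧
    (Subgroup.closure {gX n m α 0 γ, gZ n m α 0 γ}).index = 2 ∧
    ∀ (V : Type) (_ : AddCommGroup V) (_ : Module ℂ V) (_ : FiniteDimensional ℂ V)
      (_ : Nontrivial V) (ρ : Representation ℂ (GG n m α 0 γ) V),
      (∀ W : Submodule ℂ V, (∀ g : GG n m α 0 γ, ∀ v ∈ W, ρ g v ∈ W) →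
        W = ⊥ ∨ W = ⊤) →
      Module.finrank ℂ V = 1 ∨ Module.finrank ℂ V = 2 :=
  stmt19_general n m α γ
end
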